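/- arXiv:2212.03665 — 5 statements merged into one kernel-verified Lean document; each statement's English description precedes it below -/
import Mathlib

section
/- Identifiability of the mixture Poisson log-normal model: suppose two mixture Poisson log-normal densities agree, i.e. Σ_{g=1}^{G} π_g p(y;Θ_g,μ_g) = Σ_{g=1}^{G'} π'_g p(y;Θ'_g,μ'_g) for every y ∈ ℕᵖ, where both sets of component parameters satisfy Conditions (C1) and (C3) and all mixing proportions are strictly positive. Then G = G' and there is a permutation σ of {1,…,G} with π'_g = π_{σ(g)}, μ'_g = μ_{σ(g)} and Θ'_g = Θ_{σ(g)} for every g. -/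
/-!
Factorial moments turn Poisson log-normal densities into Gaussian moment generating functions:
a Poisson variable with rate `λ` has `E[Y(Y-1)⋯(Y-n+1)] = λⁿ`, so by dominated convergence
`∑_y ∏_j (y_j)_(n_j) p(y; Θ, μ) = E[exp(n ⬝ X)] = exp(n ⬝ μ + nᵀ Θ⁻¹ n / 2)` for `X ~ N(μ, Θ⁻¹)`.
Two equal mixtures therefore give equal combinations of these exponentials at every `n ∈ ℕᵖ`.
Such exponentials with distinct parameters `(μ, Θ⁻¹)` are linearly independent: choose `v ∈ ℕᵖ`
off the zero sets of finitely many nonzero polynomials, so that the pairs `(vᵀ Θ⁻¹ v / 2, v ⬝ μ)`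
stay distinct, and along `n = k v` the exponent that is lexicographically largest dominates as
`k → ∞`. Comparing coefficients, with distinct means and positive weights, matches the components.
-/

open MeasureTheory Filter

noncomputable section

/-- falling factorial `φ(y,n) = y(y-1)⋯(y-n+1)` as a real number. -/
def fallFact (y n : ℕ) : ℝ := ∏ i ∈ Finset.range n, ((y : ℝ) - (i : ℝ))

/-- density of the Gaussian distribution `N(μ, Θ⁻¹)`. -/
def gaussDensity {p : ℕ} (Θ : Matrix (Fin p) (Fin p) ℝ) (μ : Fin p → ℝ) (x : Fin p → ℝ) : ℝ :=
  (2 * Real.pi) ^ (-(p : ℝ) / 2) * Real.sqrt Θ.det *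
    Real.exp (-(dotProduct (x - μ) (Θ.mulVec (x - μ))) / 2)

/-- Poisson log-normal density on `ℕᵖ`. -/
def plnDensity {p : ℕ} (Θ : Matrix (Fin p) (Fin p) ℝ) (μ : Fin p → ℝ) (y : Fin p → ℕ) : ℝ :=
  ∫ x : Fin p → ℝ, gaussDensity Θ μ x *
    ∏ j, Real.exp (x j * (y j : ℝ) - Real.exp (x j)) / (Nat.factorial (y j) : ℝ)

/-- `Θ` is symmetric with all eigenvalues in `[m, M]`. -/
def eigBounds {p : ℕ} (m M : ℝ) (Θ : Matrix (Fin p) (Fin p) ℝ) : Prop :=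
  Θ.IsSymm ∧ ∀ v : Fin p → ℝ,
    m * (∑ i, v i ^ 2) ≤ dotProduct v (Θ.mulVec v) ∧
      dotProduct v (Θ.mulVec v) ≤ M * (∑ i, v i ^ 2)

/-- Index set of the half-vectorization `vech` of a symmetric `p × p` matrix. -/
abbrev VechIdx (p : ℕ) := {ij : Fin p × Fin p // ij.1 ≤ ij.2}

/-- symmetric matrix built from a half-vectorization. -/
def toMat {p : ℕ} (v : VechIdx p → ℝ) : Matrix (Fin p) (Fin p) ℝ :=
  fun i j => if h : i ≤ j then v ⟨(i, j), h⟩ else v ⟨(j, i), le_of_not_ge h⟩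

/-- mixture Poisson log-normal density with proportions `pw`, means `μs` and
precision matrices encoded by `ν`. -/
def mixDensity {p G : ℕ} (pw : Fin G → ℝ) (μs : Fin G → Fin p → ℝ)
    (ν : Fin G × VechIdx p → ℝ) (y : Fin p → ℕ) : ℝ :=
  ∑ g, pw g * plnDensity (toMat fun ij => ν (g, ij)) (μs g) y

/-- the parameter space `D`. -/
def paramSet (p G : ℕ) (m M : ℝ) : Set (Fin G × VechIdx p → ℝ) :=
  {ν | ∀ g, eigBounds m M (toMat fun ij => ν (g, ij))}

/-- Condition (C3): bounded and pairwise distinct mean vectors. -/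
def condC3 {p G : ℕ} (M : ℝ) (μs : Fin G → Fin p → ℝ) : Prop :=
  (∀ g, ‖μs g‖ ≤ M) ∧ Function.Injective μs

/-- the mixture Poisson log-normal distribution, as a measure on `ℕᵖ`. -/
def mixMeasure {p G : ℕ} (pw : Fin G → ℝ) (μs : Fin G → Fin p → ℝ)
    (ν : Fin G × VechIdx p → ℝ) : Measure (Fin p → ℕ) :=
  Measure.sum fun y => (ENNReal.ofReal (mixDensity pw μs ν y)) • Measure.dirac y

/-- euclidean (`ℓ₂`) norm of a vector. -/
def l2norm {ι : Type*} [Fintype ι] (v : ι → ℝ) : ℝ := Real.sqrt (∑ i, v i ^ 2)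

/-- gradient (vector of partial derivatives) of `f` at `x`. -/
def gradAt {ι : Type*} [Fintype ι] [DecidableEq ι] (f : (ι → ℝ) → ℝ) (x : ι → ℝ) : ι → ℝ :=
  fun a => fderiv ℝ f x (Pi.single a 1)

/-- `(a,b)` entry of the Hessian matrix of `f` at `x`. -/
def hessAt {ι : Type*} [Fintype ι] [DecidableEq ι] (f : (ι → ℝ) → ℝ) (x : ι → ℝ)
    (a b : ι) : ℝ :=
  fderiv ℝ (fun z => fderiv ℝ f z (Pi.single b 1)) x (Pi.single a 1)

/-- Fisher information matrix of the mixture Poisson log-normal model at `ν`. -/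
def fisherInfo {p G : ℕ} (pw : Fin G → ℝ) (μs : Fin G → Fin p → ℝ)
    (ν : Fin G × VechIdx p → ℝ) :
    Matrix (Fin G × VechIdx p) (Fin G × VechIdx p) ℝ :=
  fun a b => ∑' y : Fin p → ℕ, mixDensity pw μs ν y *
    (gradAt (fun ν' => Real.log (mixDensity pw μs ν' y)) ν a *
      gradAt (fun ν' => Real.log (mixDensity pw μs ν' y)) ν b)

/-- the lasso penalty `R(ν) = Σ_g Σ_{l≠m} |Θ_{g,lm}|`. -/
def penR {p G : ℕ} (ν : Fin G × VechIdx p → ℝ) : ℝ :=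
  ∑ g : Fin G, ∑ l : Fin p, ∑ m' : Fin p,
    if l ≠ m' then |toMat (fun ij => ν (g, ij)) l m'| else 0

/-- the penalized negative log-likelihood objective `−n⁻¹ℓₙ(ν) + λ R(ν)`. -/
def objective {p G : ℕ} (pw : Fin G → ℝ) (μs : Fin G → Fin p → ℝ) (lam : ℝ) (n : ℕ)
    (ys : ℕ → Fin p → ℕ) (ν : Fin G × VechIdx p → ℝ) : ℝ :=
  -(1 / n : ℝ) * ∑ i ∈ Finset.range n, Real.log (mixDensity pw μs ν (ys i)) + lam * penR ν

/-- maximum absolute row sum norm `‖A‖_{1,∞}`. -/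
def maxRowSum {a b : Type*} [Fintype b] (A : Matrix a b ℝ) : ℝ := ⨆ i, ∑ j, |A i j|

/-- spectral norm of a real matrix. -/
def specNorm {ι : Type*} [Fintype ι] (A : Matrix ι ι ℝ) : ℝ :=
  ⨆ v : ι → ℝ, l2norm (A.mulVec v) / l2norm v

/-- Poisson probability mass function with rate `r`. -/
def poissonPMF (r : ℝ) (k : ℕ) : ℝ := Real.exp (-r) * r ^ k / (Nat.factorial k : ℝ)

end

open MeasureTheory Filter

section

open Real Matrix Topology

variable {ι : Type*} [Fintype ι] {p : ℕ}

lemma poissonPMF_exp (x : ℝ) (k : ℕ) :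
    poissonPMF (exp x) k = exp (x * k - exp x) / k.factorial := by
  rw [poissonPMF, sub_eq_neg_add, exp_add, mul_comm x, exp_nat_mul]

lemma poissonPMF_nonneg {r : ℝ} (hr : 0 ≤ r) (k : ℕ) : 0 ≤ poissonPMF r k := by
  unfold poissonPMF
  positivity

lemma hasSum_descFactorial_mul_poissonPMF (r : ℝ) (n : ℕ) :
    HasSum (fun k => (k.descFactorial n : ℝ) * poissonPMF r k) (r ^ n) := by
  rw [← hasSum_nat_add_iff' n]
  have hlow : ∑ k ∈ Finset.range n, (k.descFactorial n : ℝ) * poissonPMF r k = 0 :=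
    Finset.sum_eq_zero fun k hk => by
      rw [Nat.descFactorial_eq_zero_iff_lt.mpr (Finset.mem_range.mp hk)]; simp
  have hexp : HasSum (fun j : ℕ => r ^ j / j.factorial) (exp r) := by
    simpa [← Real.exp_eq_exp_ℝ] using NormedSpace.expSeries_div_hasSum_exp r
  have hshift := hexp.mul_left (r ^ n * exp (-r))
  rw [mul_assoc, ← exp_add, neg_add_cancel, exp_zero, mul_one] at hshift
  rw [hlow, sub_zero]
  refine hshift.congr_fun fun j => ?_
  have hfac := Nat.factorial_mul_descFactorial (Nat.le_add_left n j)
  rw [Nat.add_sub_cancel] at hfac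
  rw [poissonPMF, ← hfac, pow_add]
  push_cast
  field_simp

lemma hasSum_pi_prod_of_nonneg {β : Type*} {q : ℕ} {f : Fin q → β → ℝ} {a : Fin q → ℝ}
    (hf0 : ∀ j k, 0 ≤ f j k) (hf : ∀ j, HasSum (f j) (a j)) :
    HasSum (fun y : Fin q → β => ∏ j, f j (y j)) (∏ j, a j) := by
  induction q with
  | zero => simp
  | succ q ih =>
    have htail := ih (fun j k => hf0 j.succ k) fun j => hf j.succ
    have htail0 : 0 ≤ fun z : Fin q → β => ∏ j, f j.succ (z j) := fun z =>
      Finset.prod_nonneg fun j _ => hf0 j.succ (z j)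
    have hmul := (hf 0).summable.mul_of_nonneg htail.summable (hf0 0) htail0
    rw [← (Fin.consEquiv fun _ => β).hasSum_iff, Fin.prod_univ_succ]
    refine ((hf 0).mul htail hmul).congr_fun fun kz => ?_
    simp only [Function.comp_apply, Fin.consEquiv_apply, Fin.prod_univ_succ, Fin.cons_zero,
      Fin.cons_succ]

lemma integrable_exp_neg_mul_sq_sub_add_mul {b : ℝ} (hb : 0 < b) (a c : ℝ) :
    Integrable fun t : ℝ => exp (-b * (t - a) ^ 2 + c * t) := by
  have hsq : ∀ t, exp (-b * (t - a) ^ 2 + c * t)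
      = exp (c * a + c ^ 2 / (4 * b)) * exp (-b * (t - (a + c / (2 * b))) ^ 2) := fun t => by
    rw [← exp_add]
    congr 1
    field_simp
    ring
  simp_rw [hsq]
  exact ((integrable_exp_neg_mul_sq hb).comp_sub_right _).const_mul _

lemma integrable_exp_neg_quadForm_add_dotProduct {m : ℝ} (hm : 0 < m) {Θ : Matrix ι ι ℝ}
    (hΘ : ∀ v, m * ∑ i, v i ^ 2 ≤ v ⬝ᵥ Θ *ᵥ v) (μ c : ι → ℝ) :
    Integrable fun x : ι → ℝ => exp (-((x - μ) ⬝ᵥ Θ *ᵥ (x - μ)) / 2 + c ⬝ᵥ x) := by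
  have hdom : Integrable fun x : ι → ℝ => ∏ i, exp (-(m / 2) * (x i - μ i) ^ 2 + c i * x i) :=
    Integrable.fintype_prod fun i => integrable_exp_neg_mul_sq_sub_add_mul (by positivity) _ _
  refine hdom.mono' (by fun_prop) (ae_of_all _ fun x => ?_)
  rw [norm_of_nonneg (exp_pos _).le, ← exp_sum, exp_le_exp, Finset.sum_add_distrib]
  have hlow := hΘ (x - μ)
  simp only [Pi.sub_apply] at hlow
  have hsum : ∑ i, -(m / 2) * (x i - μ i) ^ 2 = -(m * ∑ i, (x i - μ i) ^ 2) / 2 := by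
    rw [Finset.mul_sum, neg_div, Finset.sum_div, ← Finset.sum_neg_distrib]
    exact Finset.sum_congr rfl fun i _ => by ring
  rw [hsum, ← dotProduct]
  linarith

/-- `S` is a covariance matrix, whereas `gaussDensity` is parametrised by a precision matrix. -/
noncomputable def gaussMgf (μ : ι → ℝ) (S : Matrix ι ι ℝ) (x : ι → ℝ) : ℝ :=
  exp (x ⬝ᵥ μ + x ⬝ᵥ S *ᵥ x / 2)

lemma neg_quadForm_add_dotProduct_eq {Θ : Matrix ι ι ℝ} (hs : Θ.IsSymm) {s c : ι → ℝ}
    (hsc : Θ *ᵥ s = c) (z : ι → ℝ) :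
    -((z + s) ⬝ᵥ Θ *ᵥ (z + s)) / 2 + c ⬝ᵥ (z + s) = -(z ⬝ᵥ Θ *ᵥ z) / 2 + c ⬝ᵥ s / 2 := by
  have hcross : s ⬝ᵥ Θ *ᵥ z = z ⬝ᵥ c := by
    rw [← hsc, ← dotProduct_transpose_mulVec, hs.eq]
  simp only [mulVec_add, dotProduct_add, add_dotProduct, hsc, hcross, dotProduct_comm c]
  ring

lemma gaussDensity_nonneg (Θ : Matrix (Fin p) (Fin p) ℝ) (μ x : Fin p → ℝ) :
    0 ≤ gaussDensity Θ μ x := by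
  unfold gaussDensity
  positivity

lemma gaussDensity_mul_exp_dotProduct (Θ : Matrix (Fin p) (Fin p) ℝ) (μ c x : Fin p → ℝ) :
    gaussDensity Θ μ x * exp (c ⬝ᵥ x) = (2 * π) ^ (-(p : ℝ) / 2) * √Θ.det *
      exp (-((x - μ) ⬝ᵥ Θ *ᵥ (x - μ)) / 2 + c ⬝ᵥ x) := by
  rw [gaussDensity, exp_add, mul_assoc]

lemma integrable_gaussDensity_mul_exp_dotProduct {m : ℝ} (hm : 0 < m)
    {Θ : Matrix (Fin p) (Fin p) ℝ} (hΘ : ∀ v, m * ∑ i, v i ^ 2 ≤ v ⬝ᵥ Θ *ᵥ v) (μ c : Fin p → ℝ) :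
    Integrable fun x => gaussDensity Θ μ x * exp (c ⬝ᵥ x) := by
  simp_rw [gaussDensity_mul_exp_dotProduct]
  exact (integrable_exp_neg_quadForm_add_dotProduct hm hΘ μ c).const_mul _

lemma integral_gaussDensity_mul_exp_dotProduct {Θ : Matrix (Fin p) (Fin p) ℝ} (hs : Θ.IsSymm)
    (hd : IsUnit Θ.det) (μ c : Fin p → ℝ) :
    ∫ x, gaussDensity Θ μ x * exp (c ⬝ᵥ x) = (∫ x, gaussDensity Θ 0 x) * gaussMgf μ Θ⁻¹ c := by
  have hsc : Θ *ᵥ (Θ⁻¹ *ᵥ c) = c := by rw [mulVec_mulVec, mul_nonsing_inv Θ hd, one_mulVec]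
  rw [← integral_add_right_eq_self _ (μ + Θ⁻¹ *ᵥ c), ← integral_mul_const]
  refine integral_congr_ae (ae_of_all _ fun z => ?_)
  have hshift : z + (μ + Θ⁻¹ *ᵥ c) - μ = z + Θ⁻¹ *ᵥ c := by abel
  dsimp only
  rw [gaussDensity_mul_exp_dotProduct, hshift, add_left_comm, dotProduct_add c μ, ← add_assoc,
    add_right_comm, neg_quadForm_add_dotProduct_eq hs hsc, gaussDensity, gaussMgf, sub_zero]
  simp only [exp_add]
  ring

lemma continuous_gaussDensity (Θ : Matrix (Fin p) (Fin p) ℝ) (μ : Fin p → ℝ) :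
    Continuous (gaussDensity Θ μ) := by
  unfold gaussDensity
  simp only [dotProduct, mulVec]
  fun_prop

lemma integral_gaussDensity_pos {m : ℝ} (hm : 0 < m) {Θ : Matrix (Fin p) (Fin p) ℝ}
    (hΘ : ∀ v, m * ∑ i, v i ^ 2 ≤ v ⬝ᵥ Θ *ᵥ v) (hdet : 0 < Θ.det) (μ : Fin p → ℝ) :
    0 < ∫ x, gaussDensity Θ μ x := by
  have hint := integrable_gaussDensity_mul_exp_dotProduct hm hΘ μ 0
  simp only [zero_dotProduct, exp_zero, mul_one] at hint
  refine (integral_pos_iff_support_of_nonneg (gaussDensity_nonneg Θ μ) hint).mpr ?_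
  have hpos : ∀ x, 0 < gaussDensity Θ μ x := fun x => by
    unfold gaussDensity
    positivity
  rw [Function.support_eq_univ fun x => (hpos x).ne', Measure.measure_univ_pos]
  exact NeZero.ne _

lemma plnDensity_eq_integral_poissonPMF (Θ : Matrix (Fin p) (Fin p) ℝ) (μ : Fin p → ℝ)
    (y : Fin p → ℕ) :
    plnDensity Θ μ y = ∫ x, gaussDensity Θ μ x * ∏ j, poissonPMF (exp (x j)) (y j) := by
  simp only [plnDensity, poissonPMF_exp]

/-- The constant `∫ x, gaussDensity Θ 0 x` equals `1`, but only its positivity is needed. -/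
theorem hasSum_prod_descFactorial_mul_plnDensity {m : ℝ} (hm : 0 < m)
    {Θ : Matrix (Fin p) (Fin p) ℝ} (hs : Θ.IsSymm) (hΘ : ∀ v, m * ∑ i, v i ^ 2 ≤ v ⬝ᵥ Θ *ᵥ v)
    (hd : IsUnit Θ.det) (μ : Fin p → ℝ) (n : Fin p → ℕ) :
    HasSum (fun y => (∏ j, ((y j).descFactorial (n j) : ℝ)) * plnDensity Θ μ y)
      ((∫ x, gaussDensity Θ 0 x) * gaussMgf μ Θ⁻¹ (fun j => (n j : ℝ))) := by
  set F : (Fin p → ℕ) → (Fin p → ℝ) → ℝ := fun y x =>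
    gaussDensity Θ μ x * ∏ j, ((y j).descFactorial (n j) * poissonPMF (exp (x j)) (y j))
  have hF0 : ∀ y x, 0 ≤ F y x := fun y x => mul_nonneg (gaussDensity_nonneg Θ μ x)
    (Finset.prod_nonneg fun j _ => mul_nonneg (Nat.cast_nonneg _)
      (poissonPMF_nonneg (exp_pos _).le _))
  have hFsum : ∀ x, HasSum (fun y => F y x)
      (gaussDensity Θ μ x * exp ((fun j => (n j : ℝ)) ⬝ᵥ x)) := fun x => by
    have hprod := hasSum_pi_prod_of_nonneg (fun j k => mul_nonneg (Nat.cast_nonneg _)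
      (poissonPMF_nonneg (exp_pos (x j)).le k))
      fun j => hasSum_descFactorial_mul_poissonPMF (exp (x j)) (n j)
    simp only [dotProduct, exp_sum, exp_nat_mul]
    exact hprod.mul_left (gaussDensity Θ μ x)
  have hF : ∀ y, (∏ j, ((y j).descFactorial (n j) : ℝ)) * plnDensity Θ μ y = ∫ x, F y x := by
    intro y
    rw [plnDensity_eq_integral_poissonPMF, ← integral_const_mul]
    refine integral_congr_ae (ae_of_all _ fun x => ?_)
    simp only [F, Finset.prod_mul_distrib]
    ring
  simp_rw [hF]
  rw [← integral_gaussDensity_mul_exp_dotProduct hs hd]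
  refine hasSum_integral_of_dominated_convergence F (fun y => ?_)
    (fun y => ae_of_all _ fun x => (Real.norm_of_nonneg (hF0 y x)).le)
    (ae_of_all _ fun x => (hFsum x).summable) ?_ (ae_of_all _ hFsum)
  · have hpoisson : Continuous fun x : Fin p → ℝ =>
        ∏ j, ((y j).descFactorial (n j) * poissonPMF (exp (x j)) (y j)) := by
      unfold poissonPMF
      fun_prop
    exact ((continuous_gaussDensity Θ μ).mul hpoisson).aestronglyMeasurable
  · simp_rw [fun x => (hFsum x).tsum_eq]
    exact integrable_gaussDensity_mul_exp_dotProduct hm hΘ μ _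

lemma tendsto_mul_sq_add_mul_atBot {a b : ℝ} (h : a < 0 ∨ a = 0 ∧ b < 0) :
    Tendsto (fun k : ℕ => a * (k : ℝ) ^ 2 + b * k) atTop atBot := by
  have hk : Tendsto (fun k : ℕ => (k : ℝ)) atTop atTop := tendsto_natCast_atTop_atTop
  rcases h with ha | ⟨rfl, hb⟩
  · have hlin : Tendsto (fun k : ℕ => a * (k : ℝ) + b) atTop atBot :=
      tendsto_atBot_add_const_right _ b (hk.const_mul_atTop_of_neg ha)
    exact (hlin.atBot_mul_atTop₀ hk).congr fun k => by ring
  · exact (hk.const_mul_atTop_of_neg hb).congr fun k => by ring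

lemma tendsto_exp_quadratic_div_exp_quadratic {u v : ℝ × ℝ} (h : toLex u < toLex v) :
    Tendsto (fun k : ℕ => exp (u.1 * k ^ 2 + u.2 * k) / exp (v.1 * k ^ 2 + v.2 * k)) atTop
      (𝓝 0) := by
  have hneg : u.1 - v.1 < 0 ∨ u.1 - v.1 = 0 ∧ u.2 - v.2 < 0 := by
    rw [Prod.Lex.toLex_lt_toLex] at h
    rcases h with h | ⟨h₁, h₂⟩
    · exact Or.inl (by linarith)
    · exact Or.inr ⟨by linarith, by linarith⟩
  refine (tendsto_exp_atBot.comp (tendsto_mul_sq_add_mul_atBot hneg)).congr fun k => ?_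
  rw [Function.comp_apply, ← exp_sub]
  ring_nf

lemma eq_zero_of_forall_sum_mul_exp_quadratic_eq_zero {κ : Type*} [DecidableEq κ]
    {s : Finset κ} {f : κ → ℝ × ℝ} (hf : Set.InjOn f s) {c : κ → ℝ}
    (h : ∀ k : ℕ, ∑ i ∈ s, c i * exp ((f i).1 * k ^ 2 + (f i).2 * k) = 0) :
    ∀ i ∈ s, c i = 0 := by
  induction s using Finset.induction_on_max_value (toLex ∘ f) with
  | empty => simp
  | insert a s has hmax ih =>
    -- Divided by the term of lexicographically largest exponent, every other term tends to `0`.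
    set e : κ → ℕ → ℝ := fun i k => exp ((f i).1 * k ^ 2 + (f i).2 * k)
    have hlt : ∀ x ∈ s, toLex (f x) < toLex (f a) := fun x hx =>
      (hmax x hx).lt_of_ne fun hxa => ne_of_mem_of_not_mem hx has
        (hf (Finset.mem_insert_of_mem hx) (Finset.mem_insert_self a s) (toLex.injective hxa))
    have hnorm : ∀ k, c a + ∑ x ∈ s, c x * (e x k / e a k) = 0 := fun k => by
      have hk := h k
      rw [Finset.sum_insert has] at hk
      have hpos : 0 < e a k := exp_pos _
      simp only [mul_div_assoc', ← Finset.sum_div]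
      field_simp
      linarith
    have hlim : Tendsto (fun k => c a + ∑ x ∈ s, c x * (e x k / e a k)) atTop (𝓝 (c a)) := by
      have := (tendsto_const_nhds (x := c a)).add (tendsto_finsetSum s fun x hx =>
        (tendsto_exp_quadratic_div_exp_quadratic (hlt x hx)).const_mul (c x))
      simpa using this
    have hca : c a = 0 := tendsto_nhds_unique hlim (by simp [hnorm])
    have hs := ih (hf.mono (by simp)) fun k => by simpa [Finset.sum_insert has, hca] using h k
    intro i hi
    rcases Finset.mem_insert.mp hi with rfl | hi
    · exact hca
    · exact hs i hi

lemma MvPolynomial.exists_mem_pi_forall_eval_ne_zero {R σ : Type*} [CommRing R] [IsDomain R]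
    {S : Set R} (hS : S.Infinite) {s : Finset (MvPolynomial σ R)} (hs : ∀ P ∈ s, P ≠ 0) :
    ∃ x : σ → R, (∀ i, x i ∈ S) ∧ ∀ P ∈ s, MvPolynomial.eval x P ≠ 0 := by
  by_contra! hvanish
  refine Finset.prod_ne_zero_iff.mpr hs (MvPolynomial.funext_set (fun _ => S) (fun _ => hS)
    fun x hx => ?_)
  obtain ⟨P, hP, hPx⟩ := hvanish x fun i => hx i (Set.mem_univ i)
  rw [map_prod, map_zero, Finset.prod_eq_zero hP hPx]

lemma exists_dotProduct_ne_zero_or_quadForm_ne_zero [DecidableEq ι] {w : ι → ℝ}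
    {S : Matrix ι ι ℝ} (hS : S.IsSymm) (h : w ≠ 0 ∨ S ≠ 0) :
    ∃ x : ι → ℝ, x ⬝ᵥ w ≠ 0 ∨ x ⬝ᵥ S *ᵥ x ≠ 0 := by
  by_contra! hzero
  have hdiag : ∀ i, S i i = 0 := fun i => by
    simpa [mulVec_single_one] using (hzero (Pi.single i 1)).2
  refine h.elim (fun hw => hw (funext fun i => ?_)) fun hS0 => hS0 (Matrix.ext fun i j => ?_)
  · simpa using (hzero (Pi.single i 1)).1
  · -- polarization: once the diagonal vanishes, `(eᵢ + eⱼ) ⬝ᵥ S *ᵥ (eᵢ + eⱼ) = 2 Sᵢⱼ`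
    have hpol := (hzero (Pi.single i 1 + Pi.single j 1)).2
    have hji : S j i = S i j := hS.apply i j
    simpa [mulVec_add, hdiag, hji] using hpol

section Polynomials

variable {R : Type*} [CommRing R]

open MvPolynomial

noncomputable def linearPoly (w : ι → R) : MvPolynomial ι R := ∑ j, C (w j) * X j

noncomputable def quadraticPoly (S : Matrix ι ι R) : MvPolynomial ι R :=
  ∑ j, ∑ k, C (S j k) * X j * X k

lemma eval_linearPoly (w x : ι → R) : eval x (linearPoly w) = x ⬝ᵥ w := by
  simp [linearPoly, dotProduct, mul_comm]

lemma eval_quadraticPoly (S : Matrix ι ι R) (x : ι → R) :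
    eval x (quadraticPoly S) = x ⬝ᵥ S *ᵥ x := by
  simp only [quadraticPoly, map_sum, map_mul, eval_C, eval_X, dotProduct, mulVec,
    Finset.mul_sum]
  exact Finset.sum_congr rfl fun j _ => Finset.sum_congr rfl fun k _ => by ring

end Polynomials

lemma exists_natVec_injOn_quadratic_exponent [DecidableEq ι]
    {T : Finset ((ι → ℝ) × Matrix ι ι ℝ)} (hT : ∀ t ∈ T, t.2.IsSymm) :
    ∃ v : ι → ℕ, Set.InjOn (fun t : (ι → ℝ) × Matrix ι ι ℝ =>
      ((Nat.cast ∘ v) ⬝ᵥ t.2 *ᵥ (Nat.cast ∘ v) / 2, (Nat.cast ∘ v) ⬝ᵥ t.1)) T := by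
  -- `D (t, t')` vanishes at `x` iff `t` and `t'` give the same exponent along `x`.
  set D : ((ι → ℝ) × Matrix ι ι ℝ) × ((ι → ℝ) × Matrix ι ι ℝ) → MvPolynomial ι ℝ :=
    fun tt => linearPoly (tt.1.1 - tt.2.1) ^ 2 + quadraticPoly (tt.1.2 - tt.2.2) ^ 2
  have hevalD : ∀ x tt, MvPolynomial.eval x (D tt) =
      (x ⬝ᵥ (tt.1.1 - tt.2.1)) ^ 2 + (x ⬝ᵥ (tt.1.2 - tt.2.2) *ᵥ x) ^ 2 := fun x tt => by
    simp only [D, map_add, map_pow, eval_linearPoly, eval_quadraticPoly]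
  have hD : ∀ P ∈ T.offDiag.image D, P ≠ 0 := by
    simp only [Finset.mem_image, Finset.mem_offDiag]
    rintro _ ⟨⟨t, t'⟩, ⟨ht, ht', hne⟩, rfl⟩ hzero
    have hdiff : t.1 - t'.1 ≠ 0 ∨ t.2 - t'.2 ≠ 0 := by
      by_contra! h
      exact hne (Prod.ext (sub_eq_zero.mp h.1) (sub_eq_zero.mp h.2))
    obtain ⟨x, hx⟩ :=
      exists_dotProduct_ne_zero_or_quadForm_ne_zero ((hT t ht).sub (hT t' ht')) hdiff
    have hvanish := congrArg (MvPolynomial.eval x) hzero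
    rw [hevalD, map_zero] at hvanish
    rcases hx with hx | hx <;> nlinarith [pow_pos (sq_pos_of_ne_zero hx) 1]
  obtain ⟨x, hxℕ, hx⟩ := MvPolynomial.exists_mem_pi_forall_eval_ne_zero
    (Set.infinite_range_of_injective Nat.cast_injective) hD
  choose v hv using hxℕ
  obtain rfl : Nat.cast ∘ v = x := funext hv
  refine ⟨v, fun t ht t' ht' heq => by_contra fun hne => hx _
    (Finset.mem_image_of_mem D ((Finset.mem_offDiag (x := (t, t'))).mpr ⟨ht, ht', hne⟩)) ?_⟩
  obtain ⟨hquad, hlin⟩ := Prod.mk.inj heq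
  rw [hevalD, dotProduct_sub, sub_mulVec, dotProduct_sub]
  dsimp only at hquad hlin ⊢
  rw [hlin, div_left_inj' two_ne_zero |>.mp hquad]
  ring

lemma gaussMgf_smul (μ : ι → ℝ) (S : Matrix ι ι ℝ) (x : ι → ℝ) (k : ℝ) :
    gaussMgf μ S (k • x) = exp ((x ⬝ᵥ S *ᵥ x / 2) * k ^ 2 + (x ⬝ᵥ μ) * k) := by
  simp only [gaussMgf, mulVec_smul, smul_dotProduct, dotProduct_smul, smul_eq_mul]
  ring_nf

theorem eq_zero_of_forall_sum_mul_gaussMgf_eq_zero [DecidableEq ι]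
    {T : Finset ((ι → ℝ) × Matrix ι ι ℝ)} (hT : ∀ t ∈ T, t.2.IsSymm)
    {c : (ι → ℝ) × Matrix ι ι ℝ → ℝ}
    (h : ∀ n : ι → ℕ, ∑ t ∈ T, c t * gaussMgf t.1 t.2 (fun j => (n j : ℝ)) = 0) :
    ∀ t ∈ T, c t = 0 := by
  obtain ⟨v, hv⟩ := exists_natVec_injOn_quadratic_exponent hT
  refine eq_zero_of_forall_sum_mul_exp_quadratic_eq_zero hv fun k => ?_
  have hn : (fun j => ((k * v j : ℕ) : ℝ)) = (k : ℝ) • (Nat.cast ∘ v) := by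
    ext j
    push_cast
    rfl
  simpa only [hn, gaussMgf_smul] using h fun j => k * v j

theorem sum_fiber_eq_zero_of_forall_sum_mul_gaussMgf_eq_zero {κ : Type*} [Fintype κ]
    [DecidableEq ι] (par : κ → (ι → ℝ) × Matrix ι ι ℝ) (hpar : ∀ i, (par i).2.IsSymm)
    {c : κ → ℝ}
    (h : ∀ n : ι → ℕ, ∑ i, c i * gaussMgf (par i).1 (par i).2 (fun j => (n j : ℝ)) = 0)
    (t : (ι → ℝ) × Matrix ι ι ℝ) : ∑ i with par i = t, c i = 0 := by
  by_cases ht : t ∈ Finset.univ.image par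
  · refine eq_zero_of_forall_sum_mul_gaussMgf_eq_zero (T := Finset.univ.image par)
      (c := fun t => ∑ i with par i = t, c i) (by simpa using fun i => hpar i) (fun n => ?_) t ht
    rw [← h n, ← Finset.sum_fiberwise_of_maps_to (s := Finset.univ) (t := Finset.univ.image par)
      (g := par) (by simp)]
    refine Finset.sum_congr rfl fun t' _ => ?_
    rw [Finset.sum_mul]
    exact Finset.sum_congr rfl fun i hi => by rw [(Finset.mem_filter.mp hi).2]
  · exact Finset.sum_eq_zero fun i hi =>
      absurd ((Finset.mem_filter.mp hi).2 ▸ Finset.mem_image_of_mem par (Finset.mem_univ i)) ht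

theorem sum_fiber_eq_of_forall_sum_mul_gaussMgf_eq {κ κ' : Type*} [Fintype κ] [Fintype κ']
    [DecidableEq ι] {par₁ : κ → (ι → ℝ) × Matrix ι ι ℝ} {par₂ : κ' → (ι → ℝ) × Matrix ι ι ℝ}
    (hpar₁ : ∀ i, (par₁ i).2.IsSymm) (hpar₂ : ∀ i, (par₂ i).2.IsSymm) {a₁ : κ → ℝ} {a₂ : κ' → ℝ}
    (h : ∀ n : ι → ℕ, ∑ i, a₁ i * gaussMgf (par₁ i).1 (par₁ i).2 (fun j => (n j : ℝ)) =
      ∑ i, a₂ i * gaussMgf (par₂ i).1 (par₂ i).2 (fun j => (n j : ℝ)))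
    (t : (ι → ℝ) × Matrix ι ι ℝ) : ∑ i with par₁ i = t, a₁ i = ∑ i with par₂ i = t, a₂ i := by
  have hzero := sum_fiber_eq_zero_of_forall_sum_mul_gaussMgf_eq_zero (Sum.elim par₁ par₂)
    (Sum.forall.mpr ⟨hpar₁, hpar₂⟩) (c := Sum.elim a₁ (-a₂))
    (fun n => by simp [Fintype.sum_sum_type, h n]) t
  rw [Finset.sum_filter, Fintype.sum_sum_type] at hzero
  rw [← sub_eq_zero, sub_eq_add_neg, Finset.sum_filter, Finset.sum_filter,
    ← Finset.sum_neg_distrib]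
  simp only [neg_ite, neg_zero, Sum.elim_inl, Sum.elim_inr, Pi.neg_apply] at hzero ⊢
  exact hzero

section Matching

variable {P κ κ' : Type*} [Fintype κ] [Fintype κ'] [DecidableEq P] {par₁ : κ → P}
  {par₂ : κ' → P} {a₁ : κ → ℝ} {a₂ : κ' → ℝ}

lemma sum_fiber_apply_of_injective (hpar : Function.Injective par₁) (i : κ) :
    ∑ j with par₁ j = par₁ i, a₁ j = a₁ i := by
  classical
  simp [Finset.sum_filter, hpar.eq_iff]

lemma exists_apply_eq_of_sum_fiber_eq (hpar₁ : Function.Injective par₁)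
    (hpar₂ : Function.Injective par₂) (ha₂ : ∀ i, 0 < a₂ i)
    (h : ∀ t, ∑ i with par₁ i = t, a₁ i = ∑ i with par₂ i = t, a₂ i) (i' : κ') :
    ∃ i, par₁ i = par₂ i' ∧ a₁ i = a₂ i' := by
  have hfiber := h (par₂ i')
  rw [sum_fiber_apply_of_injective hpar₂] at hfiber
  obtain ⟨i, hi, -⟩ := Finset.exists_ne_zero_of_sum_ne_zero (hfiber ▸ (ha₂ i').ne')
  obtain hi : par₁ i = par₂ i' := (Finset.mem_filter.mp hi).2
  refine ⟨i, hi, ?_⟩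
  rwa [← hi, sum_fiber_apply_of_injective hpar₁] at hfiber

theorem exists_equiv_of_sum_fiber_eq (hpar₁ : Function.Injective par₁)
    (hpar₂ : Function.Injective par₂) (ha₁ : ∀ i, 0 < a₁ i) (ha₂ : ∀ i, 0 < a₂ i)
    (h : ∀ t, ∑ i with par₁ i = t, a₁ i = ∑ i with par₂ i = t, a₂ i) :
    ∃ σ : κ' ≃ κ, ∀ i, par₂ i = par₁ (σ i) ∧ a₂ i = a₁ (σ i) := by
  have hmatch := exists_apply_eq_of_sum_fiber_eq hpar₁ hpar₂ ha₂ h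
  have hrange : Set.range par₂ = Set.range par₁ := by
    refine subset_antisymm ?_ ?_ <;> rintro _ ⟨i, rfl⟩
    · obtain ⟨j, hj, -⟩ := hmatch i
      exact ⟨j, hj⟩
    · obtain ⟨j, hj, -⟩ :=
        exists_apply_eq_of_sum_fiber_eq hpar₂ hpar₁ ha₁ (fun t => (h t).symm) i
      exact ⟨j, hj⟩
  set σ : κ' ≃ κ := ((Equiv.ofInjective par₂ hpar₂).trans (Equiv.setCongr hrange)).trans
    (Equiv.ofInjective par₁ hpar₁).symm
  have hσ : ∀ i, par₁ (σ i) = par₂ i := fun i => Equiv.apply_ofInjective_symm hpar₁ _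
  refine ⟨σ, fun i => ⟨(hσ i).symm, ?_⟩⟩
  obtain ⟨j, hj, hja⟩ := hmatch i
  rw [← hja, hpar₁ (hj.trans (hσ i).symm)]

end Matching

lemma eigBounds.posDef {m M : ℝ} (hm : 0 < m) {Θ : Matrix (Fin p) (Fin p) ℝ}
    (h : eigBounds m M Θ) : Θ.PosDef := by
  refine PosDef.of_dotProduct_mulVec_pos (by simpa [IsHermitian] using h.1.eq) fun x hx => ?_
  obtain ⟨i, hi⟩ := Function.ne_iff.mp hx
  have hsq : 0 < ∑ i, x i ^ 2 :=
    Finset.sum_pos' (fun i _ => sq_nonneg _)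
      ⟨i, Finset.mem_univ i, sq_pos_of_ne_zero (by simpa using hi)⟩
  simpa using (mul_pos hm hsq).trans_le (h.2 x).1

theorem hasSum_prod_descFactorial_mul_sum_plnDensity {κ : Type*} [Fintype κ] {m M : ℝ}
    (hm : 0 < m) (w : κ → ℝ) (μ : κ → Fin p → ℝ) (Θ : κ → Matrix (Fin p) (Fin p) ℝ)
    (hΘ : ∀ i, eigBounds m M (Θ i)) (n : Fin p → ℕ) :
    HasSum
      (fun y => (∏ j, ((y j).descFactorial (n j) : ℝ)) * ∑ i, w i * plnDensity (Θ i) (μ i) y)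
      (∑ i, w i * (∫ x, gaussDensity (Θ i) 0 x) * gaussMgf (μ i) (Θ i)⁻¹ (fun j => (n j : ℝ))) :=
    by
  have hcomp := hasSum_sum fun i (_ : i ∈ Finset.univ) =>
    (hasSum_prod_descFactorial_mul_plnDensity hm (hΘ i).1 (fun v => ((hΘ i).2 v).1)
      ((hΘ i).posDef hm).det_pos.ne'.isUnit (μ i) n).mul_left (w i)
  simp only [← mul_assoc] at hcomp
  refine hcomp.congr_fun fun y => ?_
  rw [Finset.mul_sum]
  exact Finset.sum_congr rfl fun i _ => by ring

end

theorem stmt0_general {p : ℕ} {m M : ℝ} (hm : 0 < m)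
    {G G' : ℕ}
    (pw₁ : Fin G → ℝ) (μ₁ : Fin G → Fin p → ℝ) (Θ₁ : Fin G → Matrix (Fin p) (Fin p) ℝ)
    (pw₂ : Fin G' → ℝ) (μ₂ : Fin G' → Fin p → ℝ) (Θ₂ : Fin G' → Matrix (Fin p) (Fin p) ℝ)
    (hpw₁ : ∀ g, 0 < pw₁ g) (hpw₂ : ∀ g, 0 < pw₂ g)
    (hC1₁ : ∀ g, eigBounds m M (Θ₁ g)) (hC1₂ : ∀ g, eigBounds m M (Θ₂ g))
    (hC3₁ : (∀ g, ‖μ₁ g‖ ≤ M) ∧ Function.Injective μ₁)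
    (hC3₂ : (∀ g, ‖μ₂ g‖ ≤ M) ∧ Function.Injective μ₂)
    (heq : ∀ y : Fin p → ℕ,
      ∑ g, pw₁ g * plnDensity (Θ₁ g) (μ₁ g) y = ∑ g, pw₂ g * plnDensity (Θ₂ g) (μ₂ g) y) :
    G = G' ∧ ∃ σ : Fin G' ≃ Fin G, ∀ g : Fin G',
      pw₂ g = pw₁ (σ g) ∧ μ₂ g = μ₁ (σ g) ∧ Θ₂ g = Θ₁ (σ g) := by
  have hmass : ∀ {Θ : Matrix (Fin p) (Fin p) ℝ}, eigBounds m M Θ → 0 < ∫ x, gaussDensity Θ 0 x :=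
    fun hΘ => integral_gaussDensity_pos hm (fun v => (hΘ.2 v).1) (hΘ.posDef hm).det_pos 0
  have hmoment := fun n : Fin p → ℕ =>
    (hasSum_prod_descFactorial_mul_sum_plnDensity hm pw₁ μ₁ Θ₁ hC1₁ n).unique
      (by simpa only [heq] using hasSum_prod_descFactorial_mul_sum_plnDensity hm pw₂ μ₂ Θ₂ hC1₂ n)
  obtain ⟨σ, hσ⟩ := exists_equiv_of_sum_fiber_eq (par₁ := fun g => (μ₁ g, (Θ₁ g)⁻¹))
    (par₂ := fun g => (μ₂ g, (Θ₂ g)⁻¹)) (fun _ _ h => hC3₁.2 (Prod.mk.inj h).1)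
    (fun _ _ h => hC3₂.2 (Prod.mk.inj h).1) (fun g => mul_pos (hpw₁ g) (hmass (hC1₁ g)))
    (fun g => mul_pos (hpw₂ g) (hmass (hC1₂ g)))
    (sum_fiber_eq_of_forall_sum_mul_gaussMgf_eq (fun g => (hC1₁ g).1.inv) (fun g => (hC1₂ g).1.inv)
      hmoment)
  refine ⟨by simpa using Fintype.card_congr σ.symm, σ, fun g => ?_⟩
  obtain ⟨hpar, hweight⟩ := hσ g
  obtain ⟨hμ, hinv⟩ := Prod.mk.inj hpar
  have hΘ : Θ₂ g = Θ₁ (σ g) := Matrix.inv_inj hinv ((hC1₂ g).posDef hm).det_pos.ne'.isUnit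
  rw [hΘ] at hweight
  exact ⟨mul_right_cancel₀ (hmass (hC1₁ (σ g))).ne' hweight, hμ, hΘ⟩

/-- Identifiability of the mixture Poisson log-normal model: if two mixture Poisson
log-normal densities agree pointwise on ℕᵖ, with both sets of parameters satisfying
Conditions (C1) and (C3) and strictly positive mixing proportions, then the numbers of
components agree and the parameters agree up to a permutation. -/
theorem stmt0 {p : ℕ} (hp : 0 < p) {m M : ℝ} (hm : 0 < m) (hmM : m < M)
    {G G' : ℕ} (hG : 0 < G) (hG' : 0 < G')
    (pw₁ : Fin G → ℝ) (μ₁ : Fin G → Fin p → ℝ) (Θ₁ : Fin G → Matrix (Fin p) (Fin p) ℝ)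
    (pw₂ : Fin G' → ℝ) (μ₂ : Fin G' → Fin p → ℝ) (Θ₂ : Fin G' → Matrix (Fin p) (Fin p) ℝ)
    (hpw₁ : ∀ g, 0 < pw₁ g) (hpw₂ : ∀ g, 0 < pw₂ g)
    (hsum₁ : ∑ g, pw₁ g = 1) (hsum₂ : ∑ g, pw₂ g = 1)
    (hC1₁ : ∀ g, eigBounds m M (Θ₁ g)) (hC1₂ : ∀ g, eigBounds m M (Θ₂ g))
    (hC3₁ : (∀ g, ‖μ₁ g‖ ≤ M) ∧ Function.Injective μ₁)
    (hC3₂ : (∀ g, ‖μ₂ g‖ ≤ M) ∧ Function.Injective μ₂)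
    (heq : ∀ y : Fin p → ℕ,
      ∑ g, pw₁ g * plnDensity (Θ₁ g) (μ₁ g) y = ∑ g, pw₂ g * plnDensity (Θ₂ g) (μ₂ g) y) :
    G = G' ∧ ∃ σ : Fin G' ≃ Fin G, ∀ g : Fin G',
      pw₂ g = pw₁ (σ g) ∧ μ₂ g = μ₁ (σ g) ∧ Θ₂ g = Θ₁ (σ g) :=
  stmt0_general hm pw₁ μ₁ Θ₁ pw₂ μ₂ Θ₂ hpw₁ hpw₂ hC1₁ hC1₂ hC3₁ hC3₂ heq
end

section
/- One-dimensional dominating function lemma: let 0<m<M, θ ∈ [m,M] and |μ| ≤ M, and define f¹(y,θ,μ) = ∫_ℝ exp(−θ(x−μ)²/2) exp(−exp(x)) exp(xy) dx for y ∈ ℕ. Then there exist a constant C > 0 depending only on m and M, and a threshold Y₀ ∈ ℕ, such that for every integer y ≥ Y₀ and all such θ, μ, f¹(y,θ,μ) ≥ C exp( y·log(y+1)/2 ). -/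
open MeasureTheory Filter

open MeasureTheory Filter

/-!
Restrict the integral to the unit interval `[a, a + 1]` with `a = log (y + 1)`. There
`x * y ≥ a * y`, `exp x ≤ e * (y + 1)` and `(x - μ) ^ 2 ≤ (a + 1 + M) ^ 2`, so the integral is at
least `exp (a * y - e * (y + 1) - M * (a + 1 + M) ^ 2 / 2)`. The leading term `a * y` beats the
other two by more than a factor `2` once `a` is large, since `y = exp a - 1`.
-/

open Real Set

noncomputable def lnPoissonIntegrand (θ μ y x : ℝ) : ℝ :=
  exp (-θ * (x - μ) ^ 2 / 2) * exp (-exp x) * exp (x * y)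

lemma integrable_exp_neg_mul_sq_add_mul {b : ℝ} (hb : 0 < b) (c : ℝ) :
    Integrable fun x : ℝ => exp (-b * x ^ 2 + c * x) := by
  refine (integrable_cexp_quadratic (b := (b : ℂ)) (by simpa using hb) c 0).norm.congr
    (.of_forall fun x => ?_)
  dsimp only
  rw [Complex.norm_exp, show -(b : ℂ) * x ^ 2 + c * x + 0 = ((-b * x ^ 2 + c * x : ℝ) : ℂ) by
    push_cast; ring, Complex.ofReal_re]

lemma integrable_lnPoissonIntegrand {θ : ℝ} (hθ : 0 < θ) (μ y : ℝ) :
    Integrable (lnPoissonIntegrand θ μ y) := by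
  refine (integrable_exp_neg_mul_sq_add_mul (half_pos hθ) (θ * μ + y)).mono'
    (by unfold lnPoissonIntegrand; fun_prop) (.of_forall fun x => ?_)
  rw [lnPoissonIntegrand, norm_of_nonneg (by positivity), ← exp_add, ← exp_add, exp_le_exp]
  nlinarith [exp_pos x, mul_nonneg hθ.le (sq_nonneg μ)]

lemma mul_sub_le_integral_of_le_on_Icc {f : ℝ → ℝ} (hf : Integrable f) (hf0 : 0 ≤ f)
    {a b c : ℝ} (hab : a ≤ b) (hc : ∀ x ∈ Icc a b, c ≤ f x) :
    c * (b - a) ≤ ∫ x, f x :=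
  calc c * (b - a) = c * volume.real (Icc a b) := by
        rw [Real.volume_real_Icc_of_le hab]
    _ ≤ ∫ x in Icc a b, f x :=
        setIntegral_ge_of_const_le_real measurableSet_Icc (by simp) hc hf.integrableOn
    _ ≤ ∫ x, f x := setIntegral_le_integral hf (.of_forall hf0)

lemma exp_le_lnPoissonIntegrand {M θ μ a x y : ℝ} (hθ : θ ∈ Icc 0 M)
    (hμ : |μ| ≤ M) (ha : 0 ≤ a) (hx : x ∈ Icc a (a + 1)) (hy : 0 ≤ y) :
    exp (a * y - exp (a + 1) - M * (a + 1 + M) ^ 2 / 2) ≤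
      lnPoissonIntegrand θ μ y x := by
  rw [lnPoissonIntegrand, ← exp_add, ← exp_add, exp_le_exp]
  have hexp : exp x ≤ exp (a + 1) := exp_le_exp.2 hx.2
  have hxy : a * y ≤ x * y := mul_le_mul_of_nonneg_right hx.1 hy
  have hsq : (x - μ) ^ 2 ≤ (a + 1 + M) ^ 2 := by
    obtain ⟨hμl, hμr⟩ := abs_le.1 hμ
    exact sq_le_sq' (by linarith [hx.1]) (by linarith [hx.2])
  have hquad : θ * (x - μ) ^ 2 ≤ M * (a + 1 + M) ^ 2 :=
    mul_le_mul hθ.2 hsq (sq_nonneg _) (hθ.1.trans hθ.2)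
  linarith

lemma eventually_exp_add_one_add_le_mul {M : ℝ} (hM : 0 ≤ M) :
    ∀ᶠ a in atTop, exp (a + 1) + M * (a + 1 + M) ^ 2 / 2 ≤ (exp a - 1) * a / 2 := by
  filter_upwards [eventually_ge_atTop (max (8 * exp 1) (max (32 * M) (1 + M)))] with a ha
  obtain ⟨h8e, h32M, h1M⟩ : 8 * exp 1 ≤ a ∧ 32 * M ≤ a ∧ 1 + M ≤ a := by
    simpa only [max_le_iff] using ha
  have ha0 : 0 ≤ a := by linarith
  have hexp_sq : a ^ 2 / 2 ≤ exp a := by nlinarith [quadratic_le_exp_of_nonneg ha0]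
  have hexp_two : 2 ≤ exp a := by linarith [add_one_le_exp a]
  have hsq : (a + 1 + M) ^ 2 ≤ 4 * a ^ 2 := by nlinarith
  have he : exp 1 * exp a ≤ exp a * a / 8 := by nlinarith [exp_pos a]
  have hM' : M * a ^ 2 ≤ exp a * a / 16 := by nlinarith
  rw [exp_add, mul_comm (exp a)]
  nlinarith [mul_le_mul_of_nonneg_left hsq hM]

lemma tendsto_log_natCast_add_one_atTop :
    Tendsto (fun y : ℕ => log ((y : ℝ) + 1)) atTop atTop :=
  tendsto_log_atTop.comp (tendsto_atTop_add_const_right _ 1 tendsto_natCast_atTop_atTop)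

/-- One-dimensional dominating function lemma: for θ ∈ [m,M] and |μ| ≤ M, the integral
f¹(y,θ,μ) = ∫ exp(−θ(x−μ)²/2) exp(−exp(x)) exp(xy) dx is bounded below by
C·exp(y·log(y+1)/2) for all large enough integers y, with C > 0 depending only on m, M. -/
theorem stmt5 {m M : ℝ} (hm : 0 < m) (hmM : m < M) :
    ∃ C > (0 : ℝ), ∃ Y₀ : ℕ, ∀ y : ℕ, Y₀ ≤ y → ∀ θ ∈ Set.Icc m M, ∀ μ : ℝ, |μ| ≤ M →
      C * Real.exp ((y : ℝ) * Real.log ((y : ℝ) + 1) / 2) ≤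
        ∫ x : ℝ, Real.exp (-θ * (x - μ) ^ 2 / 2) * Real.exp (-Real.exp x) *
          Real.exp (x * (y : ℝ)) := by
  obtain ⟨Y₀, hY₀⟩ := eventually_atTop.1 <| tendsto_log_natCast_add_one_atTop.eventually <|
    eventually_exp_add_one_add_le_mul (hm.trans hmM).le
  refine ⟨1, one_pos, Y₀, fun y hy θ hθ μ hμ => ?_⟩
  set a := log ((y : ℝ) + 1)
  have ha : 0 ≤ a := log_nonneg (by linarith [y.cast_nonneg (α := ℝ)])
  have hy_eq : (y : ℝ) = exp a - 1 := by rw [exp_log (by positivity)]; ring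
  have hθ0 : 0 < θ := hm.trans_le hθ.1
  calc 1 * exp (y * a / 2)
      ≤ exp (a * y - exp (a + 1) - M * (a + 1 + M) ^ 2 / 2) * (a + 1 - a) := by
        rw [one_mul, add_sub_cancel_left, mul_one, exp_le_exp]
        have hbound := hY₀ y hy
        rw [← hy_eq] at hbound
        linarith
    _ ≤ _ := mul_sub_le_integral_of_le_on_Icc
        (integrable_lnPoissonIntegrand hθ0 μ y) (fun x => by unfold lnPoissonIntegrand; positivity)
        (by linarith) fun x hx => exp_le_lnPoissonIntegrand ⟨hθ0.le, hθ.2⟩ hμ ha hx y.cast_nonneg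
end

section
/- Good vector lemma: let ξ = (ξ_1,…,ξ_G) ∈ ℝ^G be such that for some index s, ξ_s ≠ ξ_g for all g ≠ s; let σ = (σ_1,…,σ_G) with σ_g > 0 for all g, and let α = (α_1,…,α_G) ∈ ℝ^G. If Σ_{g=1}^G α_g exp( ξ_g z + σ_g z²/2 ) = 0 for every z ∈ ℕ, then α_s = 0. -/
open MeasureTheory Filter

open MeasureTheory Filter

/-! Order the pairs `(σ_g, ξ_g)` lexicographically. Dividing the relation by the term of the largest
pair, every other term tends to `0` as `z → ∞`, so the coefficient of the largest pair vanishes;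
by induction the functions `z ↦ exp (ξ z + σ z² / 2)` for distinct pairs are linearly independent
on `ℕ`. Since `ξ_s` is attained only at `s`, the coefficient of the pair `(σ_s, ξ_s)` is `α_s`. -/

open Topology

/-- The pair is `(σ, ξ)`, so that the lexicographic order compares growth as `z → ∞`. -/
noncomputable def expQuad (p : ℝ ×ₗ ℝ) (z : ℝ) : ℝ :=
  Real.exp ((ofLex p).2 * z + (ofLex p).1 * z ^ 2 / 2)

theorem tendsto_expQuad_div_expQuad {p q : ℝ ×ₗ ℝ} (hpq : p < q) :
    Tendsto (fun z => expQuad p z / expQuad q z) atTop (𝓝 0) := by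
  set a := (ofLex p).1 - (ofLex q).1
  set b := (ofLex p).2 - (ofLex q).2
  have hexp : ∀ z, expQuad p z / expQuad q z = Real.exp (z * (a / 2 * z + b)) := fun z => by
    rw [expQuad, expQuad, ← Real.exp_sub]
    congr 1
    ring
  simp_rw [hexp]
  refine Real.tendsto_exp_atBot.comp ?_
  rcases Prod.Lex.lt_iff.1 hpq with ha | ⟨ha, hb⟩
  · refine tendsto_id.atTop_mul_atBot₀ (tendsto_atBot_add_const_right _ b ?_)
    exact tendsto_id.const_mul_atTop_of_neg (by linarith)
  · simp only [a, ha, sub_self, zero_div, zero_mul, zero_add]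
    exact tendsto_id.atTop_mul_const_of_neg (sub_neg.2 hb)

theorem coeff_eq_zero_of_sum_expQuad_eq_zero (P : Finset (ℝ ×ₗ ℝ)) (c : ℝ ×ₗ ℝ → ℝ)
    (h : ∀ z : ℕ, ∑ p ∈ P, c p * expQuad p z = 0) : ∀ p ∈ P, c p = 0 := by
  classical
  induction P using Finset.induction_on_max with
  | empty => simp
  | insert q P hlt ih =>
    have hqP : q ∉ P := fun hq => lt_irrefl q (hlt q hq)
    have hratio : ∀ z : ℕ, c q + ∑ p ∈ P, c p * (expQuad p z / expQuad q z) = 0 := fun z => by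
      have hq : expQuad q z ≠ 0 := (Real.exp_pos _).ne'
      calc c q + ∑ p ∈ P, c p * (expQuad p z / expQuad q z)
          = (∑ p ∈ insert q P, c p * expQuad p z) / expQuad q z := by
            rw [Finset.sum_insert hqP, add_div, mul_div_cancel_right₀ _ hq, Finset.sum_div]
            simp_rw [mul_div_assoc]
        _ = 0 := by rw [h z, zero_div]
    have hlim : Tendsto (fun z : ℕ => c q + ∑ p ∈ P, c p * (expQuad p z / expQuad q z))
        atTop (𝓝 (c q + 0)) := by
      refine tendsto_const_nhds.add ?_
      simpa using tendsto_finsetSum P fun p hp =>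
        ((tendsto_expQuad_div_expQuad (hlt p hp)).comp tendsto_natCast_atTop_atTop).const_mul (c p)
    simp_rw [hratio] at hlim
    have hcq : c q = 0 := by simpa using tendsto_nhds_unique hlim tendsto_const_nhds
    have hP : ∀ z : ℕ, ∑ p ∈ P, c p * expQuad p z = 0 := by
      simpa [Finset.sum_insert hqP, hcq] using h
    intro p hp
    rcases Finset.mem_insert.1 hp with rfl | hp
    exacts [hcq, ih hP p hp]

theorem sum_fiber_eq_zero_of_sum_expQuad_eq_zero {ι : Type*} (s : Finset ι) (α : ι → ℝ)
    (v : ι → ℝ ×ₗ ℝ) (h : ∀ z : ℕ, ∑ i ∈ s, α i * expQuad (v i) z = 0) (p : ℝ ×ₗ ℝ) :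
    ∑ i ∈ s with v i = p, α i = 0 := by
  classical
  by_cases hp : p ∈ s.image v
  · refine coeff_eq_zero_of_sum_expQuad_eq_zero (s.image v)
      (fun q => ∑ i ∈ s with v i = q, α i) (fun z => ?_) p hp
    rw [← h z, ← Finset.sum_fiberwise_of_maps_to fun i hi => Finset.mem_image_of_mem v hi]
    refine Finset.sum_congr rfl fun q _ => ?_
    rw [Finset.sum_mul]
    exact Finset.sum_congr rfl fun i hi => by rw [(Finset.mem_filter.1 hi).2]
  · refine Finset.sum_eq_zero fun i hi => absurd ?_ hp
    obtain ⟨his, rfl⟩ := Finset.mem_filter.1 hi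
    exact Finset.mem_image_of_mem v his

theorem stmt7_general {G : ℕ} (ξ σv α : Fin G → ℝ) (s : Fin G)
    (hgood : ∀ g, g ≠ s → ξ g ≠ ξ s)
    (h : ∀ z : ℕ, ∑ g, α g * Real.exp (ξ g * (z : ℝ) + σv g * (z : ℝ) ^ 2 / 2) = 0) :
    α s = 0 := by
  have hfiber := sum_fiber_eq_zero_of_sum_expQuad_eq_zero Finset.univ α
    (fun g => toLex (σv g, ξ g)) h (toLex (σv s, ξ s))
  rwa [Finset.sum_eq_single_of_mem s (by simp) fun g hg hgs =>
    absurd (Prod.ext_iff.1 (toLex.injective (Finset.mem_filter.1 hg).2)).2 (hgood g hgs)] at hfiber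

/-- Good vector lemma: if ξ_s is distinct from all other ξ_g, all σ_g are positive, and
Σ_g α_g exp(ξ_g z + σ_g z²/2) = 0 for every natural number z, then α_s = 0. -/
theorem stmt7 {G : ℕ} (ξ σv α : Fin G → ℝ) (s : Fin G)
    (hgood : ∀ g, g ≠ s → ξ g ≠ ξ s) (hσ : ∀ g, 0 < σv g)
    (h : ∀ z : ℕ, ∑ g, α g * Real.exp (ξ g * (z : ℝ) + σv g * (z : ℝ) ^ 2 / 2) = 0) :
    α s = 0 :=
  stmt7_general ξ σv α s hgood h
end

section
/- Lattice point outside a union of proper subspaces: for any n > 0 and any proper linear subspaces M_1,…,M_n of ℝᵖ, there exists a vector γ ∈ ℝᵖ all of whose coordinates are nonnegative integers such that γ ∉ ⋃_{i=1}^n M_i. -/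
open MeasureTheory Filter

/-! A proper subspace lies in the kernel of a nonzero linear form `f`, and `f (1, t, …, t^(p-1))`
is a nonzero polynomial in `t`, so it has finitely many roots. Any natural number `t` avoiding the
roots of the finitely many polynomials obtained this way gives `γ = (1, t, …, t^(p-1))`. -/

open Polynomial

def momentCurve {R : Type*} [Semiring R] (p : ℕ) (t : R) : Fin p → R := fun j => t ^ (j : ℕ)

section MomentCurve

variable {R : Type*} [CommRing R] {p : ℕ}

theorem LinearMap.apply_momentCurve [DecidableEq R] (f : (Fin p → R) →ₗ[R] R) (t : R) :
    f (momentCurve p t) = (ofFn p fun j => f (Pi.single j 1)).eval t := by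
  rw [f.pi_apply_eq_sum_univ, ofFn_eq_sum_monomial, eval_finsetSum]
  refine Finset.sum_congr rfl fun j _ => ?_
  simp only [momentCurve, eval_monomial, smul_eq_mul, mul_comm]
  congr 2
  ext k
  simp [Pi.single_apply, eq_comm]

theorem LinearMap.finite_setOf_apply_momentCurve_eq_zero [IsDomain R]
    {f : (Fin p → R) →ₗ[R] R} (hf : f ≠ 0) : {t | f (momentCurve p t) = 0}.Finite := by
  classical
  simp_rw [f.apply_momentCurve]
  refine finite_setOfPred_isRoot fun h => hf ((Pi.basisFun R (Fin p)).ext fun j => ?_)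
  have hcoeffs := congr_fun (injective_ofFn p (h.trans (ofFn_zero p).symm)) j
  simpa using hcoeffs

end MomentCurve

theorem exists_momentCurve_notMem_of_lt_top {K : Type*} [Field K] {p : ℕ} {ι : Type*} [Finite ι]
    {M : ι → Submodule K (Fin p → K)} (hM : ∀ i, M i < ⊤) {s : Set K} (hs : s.Infinite) :
    ∃ t ∈ s, ∀ i, momentCurve p t ∉ M i := by
  choose f hf0 hker using fun i => (M i).exists_le_ker_of_lt_top (hM i)
  have hfin : (⋃ i, {t | f i (momentCurve p t) = 0}).Finite :=
    Set.finite_iUnion fun i => LinearMap.finite_setOf_apply_momentCurve_eq_zero (hf0 i)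
  obtain ⟨t, hts, ht⟩ := hs.exists_notMem_finite hfin
  exact ⟨t, hts, fun i hmem => ht (Set.mem_iUnion.2 ⟨i, hker i hmem⟩)⟩

theorem stmt8_general {p : ℕ} {n : ℕ}
    (Msub : Fin n → Submodule ℝ (Fin p → ℝ)) (hproper : ∀ i, Msub i ≠ ⊤) :
    ∃ γ : Fin p → ℕ, ∀ i, (fun j => (γ j : ℝ)) ∉ Msub i := by
  obtain ⟨_, ⟨k, rfl⟩, hk⟩ := exists_momentCurve_notMem_of_lt_top
    (fun i => (hproper i).lt_top) (Set.infinite_range_of_injective Nat.cast_injective)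
  refine ⟨fun j => k ^ (j : ℕ), fun i hmem => hk i ?_⟩
  convert hmem
  simp [momentCurve]

/-- Lattice point outside a union of proper subspaces: given finitely many proper linear
subspaces of ℝᵖ, there is a vector with nonnegative integer coordinates lying outside
all of them. -/
theorem stmt8 {p : ℕ} (hp : 0 < p) {n : ℕ} (hn : 0 < n)
    (Msub : Fin n → Submodule ℝ (Fin p → ℝ)) (hproper : ∀ i, Msub i ≠ ⊤) :
    ∃ γ : Fin p → ℕ, ∀ i, (fun j => (γ j : ℝ)) ∉ Msub i :=
  stmt8_general Msub hproper
end

section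
/- Strict dual feasibility (deterministic lemma): let d be a positive integer, S ⊆ {1,…,d} with complement Sᶜ, Γ̂ a d×d real matrix, W, R, K ∈ ℝᵈ, Δ ∈ ℝᵈ with Δ_{Sᶜ} = 0, λ > 0 and α ∈ (0,1]. Suppose R − Γ̂Δ + W + λK = 0 (read blockwise over S and Sᶜ), Γ̂_{SS} is invertible, ‖K_S‖_∞ ≤ 2, ‖W‖_∞ + ‖R‖_∞ < αλ/4, and ‖Γ̂_{SᶜS}(Γ̂_{SS})⁻¹‖_{1,∞} ≤ 1 − α/2. Then ‖K_{Sᶜ}‖_∞ ≤ 2. -/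
open MeasureTheory Filter

open MeasureTheory Filter Matrix

/-!
On `S` the optimality equation reads `Γ̂_{SS} Δ_S = v` with `v = R_S + W_S + λ K_S`, so
`Δ_S = Γ̂_{SS}⁻¹ v` and, on `Sᶜ`, `λ K_{Sᶜ} = Γ̂_{SᶜS} Γ̂_{SS}⁻¹ v − R_{Sᶜ} − W_{Sᶜ}`.
With `ε = ‖W‖_∞ + ‖R‖_∞` we have `‖v‖_∞ ≤ ε + 2λ`, and the irrepresentability bound gives
`λ ‖K_{Sᶜ}‖_∞ ≤ (1 − α/2)(ε + 2λ) + ε = 2λ − αλ + (2 − α/2) ε < 2λ` because `ε < αλ/4`.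
-/

namespace Matrix

variable {ι κ η : Type*}

lemma submatrix_mulVec_of_eq_zero_of_notMem [Fintype ι] {R : Type*}
    [NonUnitalNonAssocSemiring R] (A : Matrix κ ι R) (r : η → κ) (S : Finset ι) {x : ι → R}
    (hx : ∀ i ∉ S, x i = 0) (k : η) :
    (A.submatrix r ((↑) : S → ι) *ᵥ fun i => x i) k = (A *ᵥ x) (r k) := by
  rw [mulVec, dotProduct, mulVec, dotProduct,
    ← Finset.sum_subset (Finset.subset_univ S) fun i _ hi => by simp [hx i hi]]
  exact Finset.sum_coe_sort S fun i => A (r k) i * x i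

lemma mulVec_eq_mul_inv_mulVec [Fintype ι] [DecidableEq ι] {R : Type*} [CommRing R]
    {A : Matrix ι ι R} (hA : IsUnit A.det) (B : Matrix η ι R) {u v : ι → R}
    (h : A *ᵥ u = v) : B *ᵥ u = (B * A⁻¹) *ᵥ v := by
  rw [← h, mulVec_mulVec, Matrix.mul_assoc, nonsing_inv_mul A hA, Matrix.mul_one]

lemma mulVec_apply_eq_of_eq_zero_of_notMem [Fintype ι] [DecidableEq ι] {R : Type*} [CommRing R]
    (Γ : Matrix ι ι R) (S : Finset ι) {x : ι → R} (hx : ∀ i ∉ S, x i = 0)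
    (hΓ : IsUnit (Γ.submatrix ((↑) : S → ι) ((↑) : S → ι)).det) (a : {a // a ∉ S}) :
    (Γ *ᵥ x) a = ((Γ.submatrix ((↑) : {a // a ∉ S} → ι) ((↑) : S → ι) *
      (Γ.submatrix ((↑) : S → ι) ((↑) : S → ι))⁻¹) *ᵥ fun i : S => (Γ *ᵥ x) i) a := by
  have hS : Γ.submatrix ((↑) : S → ι) (↑) *ᵥ (fun i : S => x i) = fun i : S => (Γ *ᵥ x) i :=
    funext (submatrix_mulVec_of_eq_zero_of_notMem Γ _ S hx)
  rw [← mulVec_eq_mul_inv_mulVec hΓ _ hS, submatrix_mulVec_of_eq_zero_of_notMem Γ _ S hx]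

end Matrix

section maxRowSum

variable {κ η : Type*} [Finite κ] [Fintype η]

lemma sum_abs_le_maxRowSum (M : Matrix κ η ℝ) (i : κ) : ∑ j, |M i j| ≤ maxRowSum M :=
  le_ciSup (f := fun i => ∑ j, |M i j|) (Set.finite_range _).bddAbove i

lemma abs_mulVec_le_maxRowSum_mul (M : Matrix κ η ℝ) {v : η → ℝ} {C : ℝ} (hC : 0 ≤ C)
    (hv : ∀ j, |v j| ≤ C) (i : κ) : |(M *ᵥ v) i| ≤ maxRowSum M * C :=
  calc |(M *ᵥ v) i| ≤ ∑ j, |M i j| * |v j| := by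
        simpa only [abs_mul, mulVec, dotProduct] using
          Finset.abs_sum_le_sum_abs (fun j => M i j * v j) _
    _ ≤ (∑ j, |M i j|) * C := by
        rw [Finset.sum_mul]
        gcongr with j
        exact hv j
    _ ≤ maxRowSum M * C := mul_le_mul_of_nonneg_right (sum_abs_le_maxRowSum M i) hC

end maxRowSum

lemma abs_add_le_iSup_abs_add_iSup_abs {ι : Type*} [Finite ι] (f g : ι → ℝ) (i : ι) :
    |f i + g i| ≤ (⨆ j, |f j|) + ⨆ j, |g j| :=
  (abs_add_le _ _).trans <| add_le_add
    (le_ciSup (f := fun j => |f j|) (Set.finite_range _).bddAbove i)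
    (le_ciSup (f := fun j => |g j|) (Set.finite_range _).bddAbove i)

theorem stmt18_general {d : ℕ} (S : Finset (Fin d))
    (Γhat : Matrix (Fin d) (Fin d) ℝ) (W R K Δ : Fin d → ℝ) (lam α : ℝ)
    (hlam : 0 < lam) (hα : 0 < α)
    (hΔ : ∀ a ∉ S, Δ a = 0)
    (heq : ∀ a, R a - Γhat.mulVec Δ a + W a + lam * K a = 0)
    (hinv : IsUnit (Γhat.submatrix
      (Subtype.val : {a : Fin d // a ∈ S} → Fin d)
      (Subtype.val : {a : Fin d // a ∈ S} → Fin d)).det)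
    (hKS : ∀ a ∈ S, |K a| ≤ 2)
    (hWR : (⨆ a, |W a|) + (⨆ a, |R a|) < α * lam / 4)
    (hirr : maxRowSum
      ((Γhat.submatrix
          (Subtype.val : {a : Fin d // a ∉ S} → Fin d)
          (Subtype.val : {a : Fin d // a ∈ S} → Fin d)) *
        ((Γhat.submatrix
          (Subtype.val : {a : Fin d // a ∈ S} → Fin d)
          (Subtype.val : {a : Fin d // a ∈ S} → Fin d))⁻¹)) ≤ 1 - α / 2) :
    ∀ a ∉ S, |K a| ≤ 2 := by
  intro a ha
  set ε := (⨆ a, |W a|) + (⨆ a, |R a|)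
  have hε : 0 ≤ ε := add_nonneg (Real.iSup_nonneg fun _ => abs_nonneg _)
    (Real.iSup_nonneg fun _ => abs_nonneg _)
  have hΓΔ : ∀ b, (Γhat *ᵥ Δ) b = W b + R b + lam * K b := fun b => by linarith [heq b]
  have hv : ∀ i : S, |(Γhat *ᵥ Δ) i| ≤ ε + 2 * lam := fun i =>
    calc |(Γhat *ᵥ Δ) i| ≤ |W i + R i| + lam * |K i| := by
          simpa only [hΓΔ, abs_mul, abs_of_pos hlam] using abs_add_le (W i + R i) (lam * K i)
      _ ≤ ε + lam * 2 := by
          gcongr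
          exacts [abs_add_le_iSup_abs_add_iSup_abs W R i, hKS i i.2]
      _ = ε + 2 * lam := by ring
  have hKa : lam * |K a| ≤ (1 - α / 2) * (ε + 2 * lam) + ε := by
    have hK : lam * K a = (Γhat *ᵥ Δ) a - (W a + R a) := by linarith [hΓΔ a]
    rw [← abs_of_pos hlam, ← abs_mul, hK, abs_of_pos hlam,
      mulVec_apply_eq_of_eq_zero_of_notMem Γhat S hΔ hinv ⟨a, ha⟩]
    refine (abs_sub _ _).trans (add_le_add ?_ (abs_add_le_iSup_abs_add_iSup_abs W R a))
    exact (abs_mulVec_le_maxRowSum_mul _ (by positivity) hv _).trans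
      (mul_le_mul_of_nonneg_right hirr (by positivity))
  nlinarith [mul_nonneg hα.le hε]

/-- Strict dual feasibility (deterministic lemma): if R − Γ̂Δ + W + λK = 0 with
Δ supported on S, Γ̂_{SS} invertible, ‖K_S‖_∞ ≤ 2, ‖W‖_∞ + ‖R‖_∞ < αλ/4 and
‖Γ̂_{SᶜS}(Γ̂_{SS})⁻¹‖_{1,∞} ≤ 1 − α/2, then ‖K_{Sᶜ}‖_∞ ≤ 2. -/
theorem stmt18 {d : ℕ} (hd : 0 < d) (S : Finset (Fin d))
    (Γhat : Matrix (Fin d) (Fin d) ℝ) (W R K Δ : Fin d → ℝ) (lam α : ℝ)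
    (hlam : 0 < lam) (hα : 0 < α) (hα1 : α ≤ 1)
    (hΔ : ∀ a ∉ S, Δ a = 0)
    (heq : ∀ a, R a - Γhat.mulVec Δ a + W a + lam * K a = 0)
    (hinv : IsUnit (Γhat.submatrix
      (Subtype.val : {a : Fin d // a ∈ S} → Fin d)
      (Subtype.val : {a : Fin d // a ∈ S} → Fin d)).det)
    (hKS : ∀ a ∈ S, |K a| ≤ 2)
    (hWR : (⨆ a, |W a|) + (⨆ a, |R a|) < α * lam / 4)
    (hirr : maxRowSum
      ((Γhat.submatrix
          (Subtype.val : {a : Fin d // a ∉ S} → Fin d)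
          (Subtype.val : {a : Fin d // a ∈ S} → Fin d)) *
        ((Γhat.submatrix
          (Subtype.val : {a : Fin d // a ∈ S} → Fin d)
          (Subtype.val : {a : Fin d // a ∈ S} → Fin d))⁻¹)) ≤ 1 - α / 2) :
    ∀ a ∉ S, |K a| ≤ 2 :=
  stmt18_general S Γhat W R K Δ lam α hlam hα hΔ heq hinv hKS hWR hirr
end
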